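/- arXiv:2502.13750 — 6 statements merged into one kernel-verified Lean document; each statement's English description precedes it below -/
import Mathlib

section
/- Let S : {0,1}ⁿ → {0,1}ⁿ. Define the regulatory graph RG(S) on vertices {1,…,n} with an edge from i to j iff there is x with S_j(x) ≠ S_j(flip(x,i)). If RG(S) has no directed cycle (including no self-loops), then S has exactly one fixed point. -/
def flipCoord {n : ℕ} (x : Fin n → Bool) (j : Fin n) : Fin n → Bool :=
  Function.update x j (!(x j))

/-- Edge from `i` to `j` in the regulatory graph of `S`. -/
def RGEdge {n : ℕ} (S : (Fin n → Bool) → Fin n → Bool) (i j : Fin n) : Prop :=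
  ∃ x, S x j ≠ S (flipCoord x i) j

lemma notEdge_eq {n : ℕ} (S : (Fin n → Bool) → Fin n → Bool) {i j : Fin n}
    (h : ¬ RGEdge S i j) (x : Fin n → Bool) : S x j = S (flipCoord x i) j := by
  by_contra hne; exact h ⟨x, hne⟩

/-- `S · j` depends only on coordinates `i` with an edge `i → j`. -/
lemma RG_depends {n : ℕ} (S : (Fin n → Bool) → Fin n → Bool) (j : Fin n) :
    ∀ x y : Fin n → Bool, (∀ i, RGEdge S i j → x i = y i) → S x j = S y j := by
  suffices H : ∀ k (x y : Fin n → Bool),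
      (Finset.univ.filter (fun i => x i ≠ y i)).card = k →
      (∀ i, RGEdge S i j → x i = y i) → S x j = S y j by
    intro x y h; exact H _ x y rfl h
  intro k
  induction k using Nat.strong_induction_on with
  | _ k ih =>
    intro x y hcard hagree
    by_cases hxy : x = y
    · rw [hxy]
    · obtain ⟨i, hi⟩ : ∃ i, x i ≠ y i := by
        by_contra h; push_neg at h; exact hxy (funext h)
      have hnoedge : ¬ RGEdge S i j := fun he => hi (hagree i he)
      have step := notEdge_eq S hnoedge x
      set x' := flipCoord x i with hx'
      have hx'i : x' i = y i := by
        simp only [hx', flipCoord, Function.update_self]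
        cases hxi : x i <;> cases hyi : y i <;> simp_all
      have hx'ne : ∀ m, m ≠ i → x' m = x m := by
        intro m hm
        simp [hx', flipCoord, Function.update_of_ne hm]
      have hsub : (Finset.univ.filter fun m => x' m ≠ y m) ⊂
          (Finset.univ.filter fun m => x m ≠ y m) := by
        constructor
        · intro m hm
          simp only [Finset.mem_filter] at *
          refine ⟨Finset.mem_univ m, ?_⟩
          by_cases hmi : m = i
          · subst hmi; exact hi
          · rw [← hx'ne m hmi]; exact hm.2
        · intro hsup
          have hmem : i ∈ Finset.univ.filter fun m => x m ≠ y m := by simp [hi]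
          have := hsup hmem
          simp [hx'i] at this
      rw [step]
      exact ih _ (hcard ▸ Finset.card_lt_card hsub) x' y rfl (fun m hm => by
        by_cases hmi : m = i
        · subst hmi; exact hx'i
        · rw [hx'ne m hmi]; exact hagree m hm)

open Classical in
/-- Robert's theorem (fixed-point part): if the regulatory graph of `S` has no
directed cycle (including self-loops), then `S` has exactly one fixed point. -/
theorem robert_unique_fixed_point {n : ℕ} (S : (Fin n → Bool) → Fin n → Bool)
    (hacyc : ∀ v : Fin n, ¬ Relation.TransGen (RGEdge S) v v) :
    ∃! x : Fin n → Bool, S x = x := by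
  have hwf : WellFounded (fun a b : Fin n => Relation.TransGen (RGEdge S) a b) := by
    have hirr : IsIrrefl (Fin n) (Relation.TransGen (RGEdge S)) := ⟨hacyc⟩
    have htr : IsTrans (Fin n) (Relation.TransGen (RGEdge S)) :=
      ⟨fun _ _ _ h1 h2 => h1.trans h2⟩
    exact Finite.wellFounded_of_trans_of_irrefl _
  set F : Fin n → Bool := hwf.fix
    (fun j IH => S (fun i => if h : Relation.TransGen (RGEdge S) i j then IH i h else false) j)
    with hF
  have hFeq : ∀ j, F j =
      S (fun i => if h : Relation.TransGen (RGEdge S) i j then F i else false) j := by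
    intro j
    rw [hF, WellFounded.fix_eq]
  have hfix : S F = F := by
    funext j
    rw [hFeq j]
    exact RG_depends S j F _ (fun i hi => by rw [dif_pos (Relation.TransGen.single hi)])
  refine ⟨F, hfix, ?_⟩
  intro y hy
  funext j
  induction j using hwf.induction with
  | _ j ihj =>
    have h1 : y j = S y j := (congrFun hy j).symm
    have h2 : F j = S F j := (congrFun hfix j).symm
    rw [h1, h2]
    exact RG_depends S j y F (fun i hi => ihj i (Relation.TransGen.single hi))
end

section
/- Let S : {0,1}ⁿ → {0,1}ⁿ with regulatory graph RG(S) having no directed cycle. Then there is a state α ∈ {0,1}ⁿ such that for every x ∈ {0,1}ⁿ, Sⁿ(x) = α; in particular α is the unique fixed point of S, reached from any state in at most n synchronous iterations. -/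
lemma not_edge_eq {n : ℕ} {S : (Fin n → Bool) → Fin n → Bool} {i j : Fin n}
    (h : ¬ RGEdge S i j) (z : Fin n → Bool) : S z j = S (flipCoord z i) j := by
  by_contra hc; exact h ⟨z, hc⟩

lemma key {n : ℕ} (S : (Fin n → Bool) → Fin n → Bool) (j : Fin n) :
    ∀ (m : ℕ) (x y : Fin n → Bool), (∀ i, RGEdge S i j → x i = y i) →
      (Finset.univ.filter (fun i => x i ≠ y i)).card ≤ m → S x j = S y j := by
  intro m
  induction m with
  | zero =>
    intro x y _ hcard
    have hxy : x = y := by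
      funext i
      by_contra hne
      have hmem : i ∈ Finset.univ.filter (fun i => x i ≠ y i) := by simp [hne]
      have := Finset.card_pos.mpr ⟨i, hmem⟩
      omega
    rw [hxy]
  | succ m ih =>
    intro x y hagree hcard
    by_cases hxy : x = y
    · rw [hxy]
    · have hex : ∃ i, x i ≠ y i := by
        by_contra h
        push_neg at h
        exact hxy (funext h)
      obtain ⟨i, hi⟩ := hex
      have hne : ¬ RGEdge S i j := fun h => hi (hagree i h)
      set x' := flipCoord x i with hx'
      have hstep : S x j = S x' j := not_edge_eq hne x
      have hx'i : x' i = y i := by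
        simp only [hx', flipCoord, Function.update_self]
        cases hxv : x i <;> cases hyv : y i <;> simp_all
      have hx'other : ∀ i', i' ≠ i → x' i' = x i' := by
        intro i' h
        simp [hx', flipCoord, Function.update_of_ne h]
      rw [hstep]
      apply ih
      · intro i' he
        by_cases h : i' = i
        · subst h; exact hx'i
        · rw [hx'other i' h]; exact hagree i' he
      · have hsub : (Finset.univ.filter (fun i' => x' i' ≠ y i')) ⊆
            (Finset.univ.filter (fun i' => x i' ≠ y i')).erase i := by
          intro i' h
          simp only [Finset.mem_filter, Finset.mem_univ, true_and] at h
          have hii : i' ≠ i := by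
            intro heq; subst heq; exact h hx'i
          refine Finset.mem_erase.mpr ⟨hii, ?_⟩
          simp only [Finset.mem_filter, Finset.mem_univ, true_and]
          rw [← hx'other i' hii]; exact h
        have h1 := Finset.card_le_card hsub
        have hmem : i ∈ (Finset.univ.filter (fun i' => x i' ≠ y i')) := by simp [hi]
        have h2 := Finset.card_erase_of_mem hmem
        have h3 := Finset.card_pos.mpr ⟨i, hmem⟩
        omega

attribute [local instance] Classical.propDecidable

lemma main_claim {n : ℕ} (S : (Fin n → Bool) → Fin n → Bool)
    (hacyc : ∀ v : Fin n, ¬ Relation.TransGen (RGEdge S) v v) :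
    ∀ (m : ℕ) (j : Fin n),
      (Finset.univ.filter (fun i => Relation.ReflTransGen (RGEdge S) i j)).card ≤ m →
      ∀ k, m ≤ k → ∀ x y, S^[k] x j = S^[k] y j := by
  intro m
  induction m with
  | zero =>
    intro j hcard k hk x y
    exfalso
    have hmem : j ∈ Finset.univ.filter (fun i => Relation.ReflTransGen (RGEdge S) i j) := by
      simp [Relation.ReflTransGen.refl]
    have := Finset.card_pos.mpr ⟨j, hmem⟩
    omega
  | succ m ih =>
    intro j hcard k hk x y
    obtain ⟨k', rfl⟩ : ∃ k', k = k' + 1 := ⟨k - 1, by omega⟩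
    rw [Function.iterate_succ_apply', Function.iterate_succ_apply']
    apply key S j n
    · intro i he
      -- ancestors of i form a subset of (ancestors of j).erase j
      have hsub : (Finset.univ.filter (fun a => Relation.ReflTransGen (RGEdge S) a i)) ⊆
          (Finset.univ.filter (fun a => Relation.ReflTransGen (RGEdge S) a j)).erase j := by
        intro a ha
        simp only [Finset.mem_filter, Finset.mem_univ, true_and] at ha
        refine Finset.mem_erase.mpr ⟨?_, ?_⟩
        · intro heq
          rw [heq] at ha
          exact hacyc j (Relation.TransGen.tail' ha he)
        · simp only [Finset.mem_filter, Finset.mem_univ, true_and]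
          exact ha.tail he
      have h1 := Finset.card_le_card hsub
      have hmemj : j ∈ Finset.univ.filter (fun a => Relation.ReflTransGen (RGEdge S) a j) := by
        simp [Relation.ReflTransGen.refl]
      have h2 := Finset.card_erase_of_mem hmemj
      have h3 := Finset.card_pos.mpr ⟨j, hmemj⟩
      exact ih i (by omega) k' (by omega) x y
    · have := Finset.card_filter_le (Finset.univ : Finset (Fin n))
        (fun i => S^[k'] x i ≠ S^[k'] y i)
      simpa using this

/-- Robert's theorem: if `RG(S)` has no directed cycle, then there is a state `α`
such that `Sⁿ x = α` for every `x`; in particular `α` is the unique fixed point. -/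
theorem robert_theorem {n : ℕ} (S : (Fin n → Bool) → Fin n → Bool)
    (hacyc : ∀ v : Fin n, ¬ Relation.TransGen (RGEdge S) v v) :
    ∃ α : Fin n → Bool, (∀ x : Fin n → Bool, S^[n] x = α) ∧
      (∀ x : Fin n → Bool, S x = x ↔ x = α) := by
  set α := S^[n] (fun _ => false) with hα
  have hall : ∀ x, S^[n] x = α := by
    intro x
    funext j
    have hcard : (Finset.univ.filter
        (fun i => Relation.ReflTransGen (RGEdge S) i j)).card ≤ n := by
      have := Finset.card_filter_le (Finset.univ : Finset (Fin n))
        (fun i => Relation.ReflTransGen (RGEdge S) i j)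
      simpa using this
    exact main_claim S hacyc n j hcard n le_rfl x _
  refine ⟨α, hall, ?_⟩
  have hfix : S α = α := by
    calc S α = S (S^[n] α) := by rw [hall α]
    _ = S^[n+1] α := (Function.iterate_succ_apply' S n α).symm
    _ = S^[n] (S α) := Function.iterate_succ_apply S n α
    _ = α := hall (S α)
  intro x
  constructor
  · intro hx
    have := Function.iterate_fixed hx n
    rw [← this, hall x]
  · intro hx; subst hx; exact hfix
end

section
/- Let S : {0,1}ⁿ → {0,1}ⁿ with RG(S) having no directed cycle. Then the fully asynchronous dynamics defined by S is simple: S has a unique fixed point α, and from every state x there is a path of length at most n in the fully asynchronous STG to α (indeed the single edge x → S(x) suffices when x ≠ α). -/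
/-- Fully asynchronous step: flip the coordinates in a nonempty subset of the
updating set. -/
def FStep {n : ℕ} (S : (Fin n → Bool) → Fin n → Bool) (x y : Fin n → Bool) : Prop :=
  ∃ J : Finset (Fin n), J.Nonempty ∧ (∀ i ∈ J, S x i ≠ x i) ∧
    y = fun i => if i ∈ J then !(x i) else x i

open Classical in
/-- Sensitivity lemma: if `S x j ≠ S y j`, some coordinate `i` on which `x` and `y`
differ has an RG edge to `j`. -/
lemma RG_sensitivity {n : ℕ} (S : (Fin n → Bool) → Fin n → Bool) :
    ∀ (x y : Fin n → Bool) (j : Fin n), S x j ≠ S y j →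
      ∃ i, RGEdge S i j ∧ x i ≠ y i := by
  have key : ∀ d (x y : Fin n → Bool) (j : Fin n),
      (Finset.univ.filter (fun i => x i ≠ y i)).card = d →
      S x j ≠ S y j → ∃ i, RGEdge S i j ∧ x i ≠ y i := by
    intro d
    induction d using Nat.strong_induction_on with
    | _ d ih =>
      intro x y j hcard hne
      rcases Finset.eq_empty_or_nonempty (Finset.univ.filter (fun i => x i ≠ y i)) with
        he | ⟨i, hi⟩
      · exfalso
        apply hne
        have hxy : x = y := by
          funext i
          by_contra h
          have : i ∈ Finset.univ.filter (fun i => x i ≠ y i) := by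
            simp [h]
          simp [he] at this
        rw [hxy]
      · have hxy : x i ≠ y i := by
          have := (Finset.mem_filter.1 hi).2
          simpa using this
        by_cases hflip : S x j ≠ S (flipCoord x i) j
        · exact ⟨i, ⟨x, hflip⟩, hxy⟩
        · push_neg at hflip
          have hne' : S (flipCoord x i) j ≠ S y j := hflip ▸ hne
          have hflipi : flipCoord x i i = y i := by
            simp only [flipCoord, Function.update_self]
            cases hxi : x i <;> cases hyi : y i <;> simp_all
          have hsub : Finset.univ.filter (fun k => flipCoord x i k ≠ y k)
              = (Finset.univ.filter (fun k => x k ≠ y k)).erase i := by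
            ext k
            simp only [Finset.mem_filter, Finset.mem_erase, Finset.mem_univ, true_and]
            constructor
            · intro hk
              rcases eq_or_ne k i with rfl | hki
              · exact absurd hflipi hk
              · refine ⟨hki, ?_⟩
                simpa [flipCoord, Function.update_of_ne hki] using hk
            · rintro ⟨hki, hk⟩
              simpa [flipCoord, Function.update_of_ne hki] using hk
          have hlt : ((Finset.univ.filter (fun k => x k ≠ y k)).erase i).card < d := by
            rw [← hcard]
            exact Finset.card_erase_lt_of_mem hi
          obtain ⟨i', hedge, hdiff⟩ :=
            ih _ (hsub ▸ hlt) (flipCoord x i) y j (by rw [hsub]) hne'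
          have hii' : i' ≠ i := by
            rintro rfl
            exact hdiff hflipi
          refine ⟨i', hedge, ?_⟩
          simpa [flipCoord, Function.update_of_ne hii'] using hdiff
  intro x y j hne
  exact key _ x y j rfl hne

open Classical in
/-- Fully asynchronous version of Robert's theorem: if `RG(S)` is acyclic, then `S`
has a unique fixed point `α`, reachable from any state by a fully asynchronous path
of length at most `n`; moreover the synchronous edge `x → S x` is a fully
asynchronous edge whenever `x ≠ α` (indeed whenever `S x ≠ x`). -/
theorem robert_fully_asynchronous {n : ℕ} (S : (Fin n → Bool) → Fin n → Bool)
    (hacyc : ∀ v : Fin n, ¬ Relation.TransGen (RGEdge S) v v) :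
    ∃ α : Fin n → Bool, S α = α ∧ (∀ β : Fin n → Bool, S β = β → β = α) ∧
      (∀ x : Fin n → Bool, ∃ k ≤ n, ∃ f : ℕ → (Fin n → Bool),
        f 0 = x ∧ f k = α ∧ ∀ m < k, FStep S (f m) (f (m + 1))) ∧
      (∀ x : Fin n → Bool, x ≠ α → FStep S x (S x)) := by
  classical
  -- rank function
  set h : Fin n → ℕ := fun j =>
    (Finset.univ.filter (fun k => Relation.TransGen (RGEdge S) k j)).card with hh
  have hmono : ∀ i j, RGEdge S i j → h i < h j := by
    intro i j hij
    apply Finset.card_lt_card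
    constructor
    · intro k hk
      simp only [Finset.mem_filter, Finset.mem_univ, true_and] at hk ⊢
      exact hk.trans (Relation.TransGen.single hij)
    · intro hsub
      have hi : i ∈ Finset.univ.filter (fun k => Relation.TransGen (RGEdge S) k j) := by
        simp [Relation.TransGen.single hij]
      have := hsub hi
      simp only [Finset.mem_filter, Finset.mem_univ, true_and] at this
      exact hacyc i this
  have hbound : ∀ j : Fin n, h j < n := by
    intro j
    have hsub : Finset.univ.filter (fun k => Relation.TransGen (RGEdge S) k j)
        ⊆ Finset.univ.erase j := by
      intro k hk
      simp only [Finset.mem_filter, Finset.mem_univ, true_and] at hk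
      refine Finset.mem_erase.2 ⟨?_, Finset.mem_univ k⟩
      rintro rfl
      exact hacyc k hk
    calc h j ≤ (Finset.univ.erase j).card := Finset.card_le_card hsub
      _ < Finset.univ.card := Finset.card_erase_lt_of_mem (Finset.mem_univ j)
      _ = n := Finset.card_univ.trans (Fintype.card_fin n)
  -- iterates become independent of the starting point
  have hconst : ∀ m (x y : Fin n → Bool) (j : Fin n), h j < m →
      S^[m] x j = S^[m] y j := by
    intro m
    induction m with
    | zero => intro x y j hj; omega
    | succ m ih =>
      intro x y j hj
      by_contra hne
      rw [Function.iterate_succ_apply' , Function.iterate_succ_apply'] at hne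
      obtain ⟨i, hedge, hdiff⟩ := RG_sensitivity S _ _ j hne
      exact hdiff (ih x y i (by have := hmono i j hedge; omega))
  have hconst' : ∀ x y : Fin n → Bool, S^[n] x = S^[n] y := by
    intro x y
    funext j
    exact hconst n x y j (hbound j)
  set α : Fin n → Bool := S^[n] (fun _ => false) with hα
  have hfix : S α = α := by
    have : S (S^[n] (fun _ => false)) = S^[n] (S (fun _ => false)) :=
      (Function.iterate_succ_apply' S n _).symm.trans (Function.iterate_succ_apply S n _)
    rw [hα, this]
    exact hconst' _ _
  have huniq : ∀ β : Fin n → Bool, S β = β → β = α := by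
    intro β hβ
    have : S^[n] β = β := Function.iterate_fixed hβ n
    rw [← this, hα]
    exact hconst' _ _
  -- a synchronous step is a fully asynchronous step when not at a fixed point
  have hstep : ∀ x : Fin n → Bool, S x ≠ x → FStep S x (S x) := by
    intro x hx
    refine ⟨Finset.univ.filter (fun i => S x i ≠ x i), ?_, ?_, ?_⟩
    · obtain ⟨i, hi⟩ := Function.ne_iff.1 hx
      exact ⟨i, by simp [hi]⟩
    · intro i hi
      simpa using (Finset.mem_filter.1 hi).2
    · funext i
      by_cases hi : S x i = x i <;> simp [hi]
      cases hxi : x i <;> simp_all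
  refine ⟨α, hfix, huniq, ?_, fun x hx => hstep x (fun hSx => hx (huniq x hSx))⟩
  intro x
  have hP : S^[n] x = α := hα ▸ hconst' x _
  have hex : ∃ m, S^[m] x = α := ⟨n, hP⟩
  refine ⟨Nat.find hex, Nat.find_le hP, fun m => S^[m] x, rfl, Nat.find_spec hex, ?_⟩
  intro m hm
  have hne : S^[m] x ≠ α := Nat.find_min hex hm
  have hSne : S (S^[m] x) ≠ S^[m] x := fun hfx => hne (huniq _ hfx)
  have h2 := hstep _ hSne
  show FStep S (S^[m] x) (S^[m+1] x)
  rwa [Function.iterate_succ_apply']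
end

section
/- Let S : {0,1}ⁿ → {0,1}ⁿ with RG(S) having no directed cycle, and let P be a family of nonempty subsets of {1,…,n} whose union is {1,…,n}. Then S has a unique fixed point α, and from every state x there is a path in the P-asynchronous STG of length at most n from x to α. -/
def updSet {n : ℕ} (S : (Fin n → Bool) → Fin n → Bool) (x : Fin n → Bool) :
    Finset (Fin n) :=
  Finset.univ.filter fun i => S x i ≠ x i

def flipSet {n : ℕ} (x : Fin n → Bool) (K : Finset (Fin n)) : Fin n → Bool :=
  fun i => if i ∈ K then !(x i) else x i

def PStep {n : ℕ} (P : Set (Finset (Fin n))) (S : (Fin n → Bool) → Fin n → Bool)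
    (x y : Fin n → Bool) : Prop :=
  ∃ J ∈ P, (J ∩ updSet S x).Nonempty ∧ y = flipSet x (J ∩ updSet S x)

lemma dep_aux {n : ℕ} (S : (Fin n → Bool) → Fin n → Bool) (j : Fin n) :
    ∀ N (x y : Fin n → Bool), (Finset.univ.filter fun i => x i ≠ y i).card ≤ N →
    (∀ i, RGEdge S i j → x i = y i) → S x j = S y j := by
  intro N
  induction N with
  | zero =>
    intro x y hcard _
    have hxy : ∀ i, x i = y i := by
      intro i
      by_contra h
      have hm : i ∈ Finset.univ.filter fun i => x i ≠ y i := by simp [h]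
      have := Finset.card_pos.mpr ⟨i, hm⟩
      omega
    rw [funext hxy]
  | succ N ih =>
    intro x y hcard hpred
    by_cases hempty : ∀ i, x i = y i
    · rw [funext hempty]
    · push_neg at hempty
      obtain ⟨i, hi⟩ := hempty
      have hnedge : ¬ RGEdge S i j := fun h => hi (hpred i h)
      have hflip : S x j = S (flipCoord x i) j := by
        by_contra h
        exact hnedge ⟨x, h⟩
      have hyi : y i = !(x i) := by revert hi; cases x i <;> cases y i <;> simp
      have hsub : (Finset.univ.filter fun k => flipCoord x i k ≠ y k) ⊆
          (Finset.univ.filter fun k => x k ≠ y k).erase i := by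
        intro k hk
        simp only [Finset.mem_filter, Finset.mem_univ, true_and] at hk
        by_cases hki : k = i
        · subst hki
          exfalso
          apply hk
          simp [flipCoord, hyi]
        · rw [Finset.mem_erase]
          refine ⟨hki, ?_⟩
          simp only [Finset.mem_filter, Finset.mem_univ, true_and]
          simpa [flipCoord, Function.update_of_ne hki] using hk
      have hmemi : i ∈ Finset.univ.filter fun k => x k ≠ y k := by simp [hi]
      have hcard' : (Finset.univ.filter fun k => flipCoord x i k ≠ y k).card ≤ N := by
        have h1 := Finset.card_le_card hsub
        have h2 := Finset.card_erase_of_mem hmemi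
        have h3 := Finset.card_pos.mpr ⟨i, hmemi⟩
        omega
      have hpred' : ∀ k, RGEdge S k j → flipCoord x i k = y k := by
        intro k hk
        have hki : k ≠ i := by rintro rfl; exact hnedge hk
        rw [show flipCoord x i k = x k from Function.update_of_ne hki _ _]
        exact hpred k hk
      rw [hflip]
      exact ih (flipCoord x i) y hcard' hpred'

lemma dep {n : ℕ} (S : (Fin n → Bool) → Fin n → Bool) (j : Fin n) (x y : Fin n → Bool)
    (h : ∀ i, RGEdge S i j → x i = y i) : S x j = S y j :=
  dep_aux S j _ x y le_rfl h

open Classical in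
noncomputable def rkRho {n : ℕ} (S : (Fin n → Bool) → Fin n → Bool) (j : Fin n) : ℕ :=
  (Finset.univ.filter fun i => Relation.TransGen (RGEdge S) i j).card

def ltS {n : ℕ} (S : (Fin n → Bool) → Fin n → Bool) (i j : Fin n) : Prop :=
  rkRho S i < rkRho S j ∨ (rkRho S i = rkRho S j ∧ i < j)

open Classical in
noncomputable def rkPi {n : ℕ} (S : (Fin n → Bool) → Fin n → Bool) (j : Fin n) : ℕ :=
  (Finset.univ.filter fun i => ltS S i j).card


/-- `P`-asynchronous version of Robert's theorem: if `RG(S)` is acyclic and `P` is a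
family of nonempty subsets covering `{1,…,n}`, then `S` has a unique fixed point
`α`, reachable from every state by a `P`-asynchronous path of length at most `n`. -/
theorem robert_P_asynchronous {n : ℕ} (S : (Fin n → Bool) → Fin n → Bool)
    (P : Set (Finset (Fin n)))
    (hP₁ : ∀ J ∈ P, J.Nonempty) (hP₂ : ∀ i : Fin n, ∃ J ∈ P, i ∈ J)
    (hacyc : ∀ v : Fin n, ¬ Relation.TransGen (RGEdge S) v v) :
    ∃ α : Fin n → Bool, S α = α ∧ (∀ β : Fin n → Bool, S β = β → β = α) ∧
      ∀ x : Fin n → Bool, ∃ k ≤ n, ∃ f : ℕ → (Fin n → Bool),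
        f 0 = x ∧ f k = α ∧ ∀ m < k, PStep P S (f m) (f (m + 1)) := by
  classical
  have hρ : ∀ i j, RGEdge S i j → rkRho S i < rkRho S j := by
    intro i j hij
    apply Finset.card_lt_card
    have hsub : (Finset.univ.filter fun k => Relation.TransGen (RGEdge S) k i) ⊆
        (Finset.univ.filter fun k => Relation.TransGen (RGEdge S) k j) := by
      intro k hk
      simp only [Finset.mem_filter, Finset.mem_univ, true_and] at hk ⊢
      exact hk.trans (Relation.TransGen.single hij)
    rw [Finset.ssubset_iff_of_subset hsub]
    refine ⟨i, ?_, ?_⟩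
    · simp only [Finset.mem_filter, Finset.mem_univ, true_and]
      exact Relation.TransGen.single hij
    · simp only [Finset.mem_filter, Finset.mem_univ, true_and]
      exact hacyc i
  have hπmono : ∀ i j, ltS S i j → rkPi S i < rkPi S j := by
    intro i j hij
    apply Finset.card_lt_card
    have hsub : (Finset.univ.filter fun k => ltS S k i) ⊆
        (Finset.univ.filter fun k => ltS S k j) := by
      intro k hk
      simp only [Finset.mem_filter, Finset.mem_univ, true_and] at hk ⊢
      rcases hk with h1 | ⟨h1, h2⟩ <;> rcases hij with h3 | ⟨h3, h4⟩
      · exact Or.inl (by omega)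
      · exact Or.inl (by omega)
      · exact Or.inl (by omega)
      · exact Or.inr ⟨by omega, lt_trans h2 h4⟩
    rw [Finset.ssubset_iff_of_subset hsub]
    refine ⟨i, ?_, ?_⟩
    · simp only [Finset.mem_filter, Finset.mem_univ, true_and]; exact hij
    · simp only [Finset.mem_filter, Finset.mem_univ, true_and]
      rintro (h | ⟨h1, h2⟩)
      · omega
      · exact lt_irrefl i h2
  have hπedge : ∀ i j, RGEdge S i j → rkPi S i < rkPi S j :=
    fun i j h => hπmono i j (Or.inl (hρ i j h))
  have hπlt : ∀ j : Fin n, rkPi S j < n := by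
    intro j
    have hss : (Finset.univ.filter fun i => ltS S i j) ⊂ Finset.univ := by
      rw [Finset.ssubset_iff_of_subset (Finset.subset_univ _)]
      refine ⟨j, Finset.mem_univ j, ?_⟩
      simp only [Finset.mem_filter, Finset.mem_univ, true_and]
      rintro (h | ⟨h1, h2⟩)
      · omega
      · exact lt_irrefl j h2
    have := Finset.card_lt_card hss
    simpa [rkPi] using this
  have hπinj : ∀ i j : Fin n, rkPi S i = rkPi S j → i = j := by
    intro i j hij
    by_contra hne
    have hlt : ltS S i j ∨ ltS S j i := by
      rcases lt_trichotomy (rkRho S i) (rkRho S j) with h | h | h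
      · exact Or.inl (Or.inl h)
      · rcases lt_or_gt_of_ne hne with h2 | h2
        · exact Or.inl (Or.inr ⟨h, h2⟩)
        · exact Or.inr (Or.inr ⟨h.symm, h2⟩)
      · exact Or.inr (Or.inl h)
    rcases hlt with h | h
    · exact absurd hij (Nat.ne_of_lt (hπmono i j h))
    · exact absurd hij.symm (Nat.ne_of_lt (hπmono j i h))
  set α := S^[n] (fun _ => false) with hα
  have stab : ∀ m, ∀ j : Fin n, rkPi S j < m →
      S (S^[m] (fun _ => false)) j = (S^[m] (fun _ => false)) j := by
    intro m
    induction m with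
    | zero => intro j hj; omega
    | succ m ih =>
      intro j hj
      rw [Function.iterate_succ_apply']
      apply dep
      intro i hi
      exact ih i (lt_of_lt_of_le (hπedge i j hi) (Nat.lt_succ_iff.mp hj))
  have hfix : S α = α := funext fun j => stab n j (hπlt j)
  have huniq : ∀ β, S β = β → β = α := by
    intro β hβ
    suffices H : ∀ m, ∀ j : Fin n, rkPi S j < m → β j = α j by
      exact funext fun j => H n j (hπlt j)
    intro m
    induction m with
    | zero => intro j hj; omega
    | succ m ih =>
      intro j hj
      calc β j = S β j := (congrFun hβ j).symm
        _ = S α j := dep S j β α fun i hi =>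
            ih i (lt_of_lt_of_le (hπedge i j hi) (Nat.lt_succ_iff.mp hj))
        _ = α j := congrFun hfix j
  have main : ∀ d m (x : Fin n → Bool), n - m ≤ d → (∀ i, rkPi S i < m → x i = α i) →
      ∃ k ≤ n - m, ∃ f : ℕ → (Fin n → Bool),
        f 0 = x ∧ f k = α ∧ ∀ l < k, PStep P S (f l) (f (l + 1)) := by
    intro d
    induction d with
    | zero =>
      intro m x hle hag
      have hx : x = α := funext fun j => hag j (by have := hπlt j; omega)
      exact ⟨0, Nat.zero_le _, fun _ => x, rfl, hx, fun l hl => absurd hl (by omega)⟩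
    | succ d ih =>
      intro m x hle hag
      by_cases hx : x = α
      · exact ⟨0, Nat.zero_le _, fun _ => x, rfl, hx, fun l hl => absurd hl (by omega)⟩
      · have hD : (Finset.univ.filter fun j => x j ≠ α j).Nonempty := by
          by_contra h
          rw [Finset.not_nonempty_iff_eq_empty, Finset.filter_eq_empty_iff] at h
          exact hx (funext fun j => not_not.mp (h (Finset.mem_univ j)))
        obtain ⟨j, hjD, hjmin⟩ := Finset.exists_min_image _ (rkPi S) hD
        simp only [Finset.mem_filter, Finset.mem_univ, true_and] at hjD
        have hmm' : m ≤ rkPi S j := by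
          by_contra h
          push_neg at h
          exact hjD (hag j h)
        have hag' : ∀ i, rkPi S i < rkPi S j → x i = α i := by
          intro i hi
          by_contra h
          have := hjmin i (by simp [h])
          omega
        have hSα : ∀ i : Fin n, rkPi S i ≤ rkPi S j → S x i = α i := by
          intro i hi
          calc S x i = S α i := dep S i x α fun i' hi' =>
              hag' i' (lt_of_lt_of_le (hπedge i' i hi') hi)
            _ = α i := congrFun hfix i
        have hnotupd : ∀ i, rkPi S i < rkPi S j → i ∉ updSet S x := by
          intro i hi
          simp only [updSet, Finset.mem_filter, Finset.mem_univ, true_and, not_not,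
            ne_eq, Decidable.not_not]
          rw [hSα i (le_of_lt hi), hag' i hi]
        have hjupd : j ∈ updSet S x := by
          simp only [updSet, Finset.mem_filter, Finset.mem_univ, true_and, ne_eq]
          rw [hSα j le_rfl]
          exact fun h => hjD h.symm
        obtain ⟨J, hJP, hjJ⟩ := hP₂ j
        have hKne : (J ∩ updSet S x).Nonempty := ⟨j, Finset.mem_inter.mpr ⟨hjJ, hjupd⟩⟩
        set y := flipSet x (J ∩ updSet S x) with hy
        have hstep : PStep P S x y := ⟨J, hJP, hKne, rfl⟩
        have hagy : ∀ i, rkPi S i < rkPi S j + 1 → y i = α i := by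
          intro i hi
          rcases Nat.lt_succ_iff_lt_or_eq.mp hi with h | h
          · have hiK : i ∉ J ∩ updSet S x :=
              fun hk => hnotupd i h (Finset.mem_inter.mp hk).2
            rw [hy]
            simp only [flipSet, if_neg hiK]
            exact hag' i h
          · have hij : i = j := hπinj i j h
            subst hij
            rw [hy]
            simp only [flipSet, if_pos (Finset.mem_inter.mpr ⟨hjJ, hjupd⟩)]
            revert hjD
            cases x i <;> cases α i <;> simp
        have hm'n : rkPi S j < n := hπlt j
        obtain ⟨k', hk', f', hf0, hfk, hfs⟩ := ih (rkPi S j + 1) y (by omega) hagy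
        refine ⟨k' + 1, by omega, fun l => if l = 0 then x else f' (l - 1), by simp, ?_, ?_⟩
        · simp [hfk]
        · intro l hl
          match l with
          | 0 =>
            simp only [if_pos rfl, if_neg (Nat.one_ne_zero)]
            simpa [hf0] using hstep
          | (l' + 1) =>
            simp only [if_neg (Nat.succ_ne_zero l'), Nat.add_sub_cancel]
            exact hfs l' (by omega)
  refine ⟨α, hfix, huniq, fun x => ?_⟩
  obtain ⟨k, hk, f, h0, hk', hs⟩ := main n 0 x (by omega) (fun i h => absurd h (by omega))
  exact ⟨k, by omega, f, h0, hk', hs⟩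
end

section
/- Let S : {0,1}ⁿ → {0,1}ⁿ with RG(S) having no directed cycle, and let P be a family of nonempty subsets of {1,…,n} covering {1,…,n}. Then the P-asynchronous STG of S contains no cycle of length ≥ 2; that is, there do not exist two distinct states x ≠ y lying on a common directed cycle. -/
/-!
Let `C` be the set of states on a common cycle with a state `x`, and `V` the set of coordinates
that are not constant on `C`. A coordinate `i` can only change along a step out of a state `p`
with `S p i ≠ p i`; since `i ∈ V` changes in both directions along the cycle, `S · i` is not
constant on `C` either, so some coordinate `j ∈ V` has an edge `j → i` in `RG(S)`. Every vertex
of the nonempty finite set `V` thus has an `RG(S)`-predecessor in `V`, which closes a cycle.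
-/

open Relation

section Finite

variable {α : Type*} [Finite α] {r : α → α → Prop}

theorem Relation.exists_transGen_self_of_forall_exists_rel {V : Set α} (hV : V.Nonempty)
    (h : ∀ i ∈ V, ∃ j ∈ V, r j i) : ∃ v, TransGen r v v := by
  by_contra! hirr
  have : Std.Irrefl (TransGen r) := ⟨hirr⟩
  obtain ⟨i, hiV, hmin⟩ := (Finite.wellFounded_of_trans_of_irrefl (TransGen r)).has_min V hV
  obtain ⟨j, hjV, hji⟩ := h i hiV
  exact hmin j hjV (TransGen.single hji)

end Finite

section StrongComponent

variable {α : Type*} (r : α → α → Prop)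

def strongComponent (x : α) : Set α :=
  {z | ReflTransGen r x z ∧ ReflTransGen r z x}

variable {r} {x z w p : α}

theorem self_mem_strongComponent : x ∈ strongComponent r x :=
  ⟨ReflTransGen.refl, ReflTransGen.refl⟩

theorem reflTransGen_of_mem_strongComponent (hz : z ∈ strongComponent r x)
    (hw : w ∈ strongComponent r x) : ReflTransGen r z w :=
  hz.2.trans hw.1

theorem mem_strongComponent_of_reflTransGen (hz : z ∈ strongComponent r x)
    (hw : w ∈ strongComponent r x) (hzp : ReflTransGen r z p) (hpw : ReflTransGen r p w) :
    p ∈ strongComponent r x :=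
  ⟨hz.1.trans hzp, hpw.trans hw.2⟩

end StrongComponent

variable {n : ℕ} {S : (Fin n → Bool) → Fin n → Bool}

section Flips

variable {x : Fin n → Bool}

@[simp]
theorem flipSet_empty : flipSet x ∅ = x := by
  ext i; simp [flipSet]

theorem flipSet_insert {a : Fin n} {K : Finset (Fin n)} (ha : a ∉ K) :
    flipSet x (insert a K) = flipCoord (flipSet x K) a := by
  ext i
  rcases eq_or_ne i a with rfl | hi
  · simp [flipSet, flipCoord, ha]
  · simp [flipSet, flipCoord, hi]

theorem flipSet_filter_ne (y : Fin n → Bool) :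
    flipSet x (Finset.univ.filter fun j => x j ≠ y j) = y := by
  ext i
  by_cases h : x i = y i <;> simp [flipSet, h, Bool.eq_not_iff]

theorem exists_rgEdge_mem_of_apply_flipSet_ne {i : Fin n} (K : Finset (Fin n))
    (h : S x i ≠ S (flipSet x K) i) : ∃ j ∈ K, RGEdge S j i := by
  classical
  induction K using Finset.induction_on with
  | empty => simp at h
  | insert a K ha ih =>
    rw [flipSet_insert ha] at h
    by_cases hK : S x i = S (flipSet x K) i
    · exact ⟨a, Finset.mem_insert_self a K, flipSet x K, hK ▸ h⟩
    · obtain ⟨j, hj, hji⟩ := ih hK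
      exact ⟨j, Finset.mem_insert_of_mem hj, hji⟩

theorem exists_rgEdge_of_apply_ne {i : Fin n} {y : Fin n → Bool} (h : S x i ≠ S y i) :
    ∃ j, x j ≠ y j ∧ RGEdge S j i := by
  rw [← flipSet_filter_ne (x := x) y] at h
  obtain ⟨j, hj, hji⟩ := exists_rgEdge_mem_of_apply_flipSet_ne _ h
  exact ⟨j, (Finset.mem_filter.mp hj).2, hji⟩

end Flips

variable {P : Set (Finset (Fin n))}

theorem PStep.apply_ne_self_of_apply_ne {x y : Fin n → Bool} (hxy : PStep P S x y) {i : Fin n}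
    (hi : x i ≠ y i) : S x i ≠ x i := by
  obtain ⟨J, -, -, rfl⟩ := hxy
  by_contra hS
  exact hi (by simp [flipSet, updSet, hS])

theorem exists_apply_ne_self_of_reflTransGen {a b : Fin n → Bool}
    (hab : ReflTransGen (PStep P S) a b) {i : Fin n} (hi : a i ≠ b i) :
    ∃ p, ReflTransGen (PStep P S) a p ∧ ReflTransGen (PStep P S) p b ∧ p i = a i ∧
      S p i ≠ p i := by
  induction hab using ReflTransGen.head_induction_on with
  | refl => exact absurd rfl hi
  | @head a c hac hcb ih =>
    by_cases hc : a i = c i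
    · obtain ⟨p, hcp, hpb, hpi, hSp⟩ := ih (hc ▸ hi)
      exact ⟨p, ReflTransGen.head hac hcp, hpb, hpi.trans hc.symm, hSp⟩
    · exact ⟨a, ReflTransGen.refl, ReflTransGen.single hac |>.trans hcb, rfl,
        hac.apply_ne_self_of_apply_ne hc⟩

theorem exists_apply_ne_of_mem_strongComponent {x z w : Fin n → Bool}
    (hz : z ∈ strongComponent (PStep P S) x) (hw : w ∈ strongComponent (PStep P S) x)
    {i : Fin n} (hi : z i ≠ w i) :
    ∃ p ∈ strongComponent (PStep P S) x, ∃ q ∈ strongComponent (PStep P S) x, S p i ≠ S q i := by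
  obtain ⟨p, hzp, hpw, hpi, hSp⟩ :=
    exists_apply_ne_self_of_reflTransGen (reflTransGen_of_mem_strongComponent hz hw) hi
  obtain ⟨q, hwq, hqz, hqi, hSq⟩ :=
    exists_apply_ne_self_of_reflTransGen (reflTransGen_of_mem_strongComponent hw hz) hi.symm
  refine ⟨p, mem_strongComponent_of_reflTransGen hz hw hzp hpw,
    q, mem_strongComponent_of_reflTransGen hw hz hwq hqz, ?_⟩
  rw [hpi] at hSp
  rw [hqi] at hSq
  rw [Bool.eq_not_iff.mpr hSp, Bool.eq_not_iff.mpr hSq]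
  simpa using hi

theorem no_P_asynchronous_cycle_general {n : ℕ} (S : (Fin n → Bool) → Fin n → Bool)
    (P : Set (Finset (Fin n)))
    (hacyc : ∀ v : Fin n, ¬ Relation.TransGen (RGEdge S) v v) :
    ¬ ∃ x y : Fin n → Bool, x ≠ y ∧
      Relation.ReflTransGen (PStep P S) x y ∧
      Relation.ReflTransGen (PStep P S) y x := by
  rintro ⟨x, y, hxy, hxy', hyx'⟩
  set C := strongComponent (PStep P S) x
  have hxC : x ∈ C := self_mem_strongComponent
  obtain ⟨i, hi⟩ := Function.ne_iff.mp hxy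
  obtain ⟨v, hv⟩ := exists_transGen_self_of_forall_exists_rel
    (V := {i | ∃ z ∈ C, ∃ w ∈ C, z i ≠ w i}) ⟨i, x, hxC, y, ⟨hxy', hyx'⟩, hi⟩ <| by
      rintro i ⟨z, hz, w, hw, hzw⟩
      obtain ⟨p, hp, q, hq, hpq⟩ := exists_apply_ne_of_mem_strongComponent hz hw hzw
      obtain ⟨j, hj, hji⟩ := exists_rgEdge_of_apply_ne hpq
      exact ⟨j, ⟨p, hp, q, hq, hj⟩, hji⟩
  exact hacyc v hv

/-- If `RG(S)` is acyclic, then the `P`-asynchronous STG contains no cycle of length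
≥ 2: no two distinct states lie on a common directed cycle. -/
theorem no_P_asynchronous_cycle {n : ℕ} (S : (Fin n → Bool) → Fin n → Bool)
    (P : Set (Finset (Fin n)))
    (hP₁ : ∀ J ∈ P, J.Nonempty) (hP₂ : ∀ i : Fin n, ∃ J ∈ P, i ∈ J)
    (hacyc : ∀ v : Fin n, ¬ Relation.TransGen (RGEdge S) v v) :
    ¬ ∃ x y : Fin n → Bool, x ≠ y ∧
      Relation.ReflTransGen (PStep P S) x y ∧
      Relation.ReflTransGen (PStep P S) y x :=
  no_P_asynchronous_cycle_general S P hacyc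
end

section
/- Let S : {0,1}ⁿ → {0,1}ⁿ have r inputs g₁,…,g_r (i.e., S_i(x) = x_i for i ≤ r), and suppose RG(S) has no directed cycle other than the self-loops at the inputs. Then S has exactly 2^r fixed points, each determined by its first r coordinates: for every a ∈ {0,1}^r there is a unique fixed point in C_a = {x : x_i = a_i for i ≤ r}, and every x ∈ C_a satisfies S^{n−r}(x) equals that fixed point. -/
/-- The regulation graph with input self-loops removed. -/
def Ed {n : ℕ} (r : ℕ) (S : (Fin n → Bool) → Fin n → Bool) (i j : Fin n) : Prop :=
  RGEdge S i j ∧ ¬ (i = j ∧ i.val < r)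

open Classical in
/-- Height of a vertex: number of non-input ancestors (inclusive). -/
noncomputable def ht {n : ℕ} (r : ℕ) (S : (Fin n → Bool) → Fin n → Bool) (j : Fin n) : ℕ :=
  (Finset.univ.filter fun i => r ≤ i.val ∧ Relation.ReflTransGen (Ed r S) i j).card

lemma indep {n : ℕ} (S : (Fin n → Bool) → Fin n → Bool) (j : Fin n) :
    ∀ d (z w : Fin n → Bool),
      (Finset.univ.filter fun i => z i ≠ w i).card ≤ d →
      (∀ i, RGEdge S i j → z i = w i) → S z j = S w j := by
  classical
  intro d
  induction d with
  | zero =>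
      intro z w hcard h
      have hzw : z = w := by
        funext i
        by_contra hne
        have hmem : i ∈ Finset.univ.filter fun i => z i ≠ w i := by simp [hne]
        have := Finset.card_pos.mpr ⟨i, hmem⟩
        omega
      rw [hzw]
  | succ d ih =>
      intro z w hcard h
      by_cases hzw : z = w
      · rw [hzw]
      · have hex : ∃ i, z i ≠ w i := by
          by_contra hc; push_neg at hc; exact hzw (funext hc)
        obtain ⟨i, hi⟩ := hex
        have hnedge : ¬ RGEdge S i j := fun he => hi (h i he)
        have hflip : S z j = S (flipCoord z i) j := by
          by_contra hc
          exact hnedge ⟨z, hc⟩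
        rw [hflip]
        apply ih
        · have hsub : (Finset.univ.filter fun i' => flipCoord z i i' ≠ w i') ⊆
              (Finset.univ.filter fun i' => z i' ≠ w i').erase i := by
            intro k hk
            simp only [Finset.mem_filter, Finset.mem_univ, true_and] at hk
            rcases eq_or_ne k i with rfl | hki
            · exfalso
              apply hk
              simp only [flipCoord, Function.update_self]
              cases hz : z k <;> cases hw : w k <;> simp_all
            · simp only [Finset.mem_erase, Finset.mem_filter, Finset.mem_univ, true_and]
              refine ⟨hki, ?_⟩
              simpa [flipCoord, Function.update_of_ne hki] using hk
          have h1 := Finset.card_le_card hsub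
          have h2 : ((Finset.univ.filter fun i' => z i' ≠ w i').erase i).card
              = (Finset.univ.filter fun i' => z i' ≠ w i').card - 1 :=
            Finset.card_erase_of_mem (by simp [hi])
          have hpos : 0 < (Finset.univ.filter fun i' => z i' ≠ w i').card :=
            Finset.card_pos.mpr ⟨i, by simp [hi]⟩
          omega
        · intro i' he
          have hki : i' ≠ i := fun hh => hnedge (hh ▸ he)
          rw [show flipCoord z i i' = z i' from Function.update_of_ne hki _ _]
          exact h i' he

lemma no_edge_into_input {n r : ℕ} {S : (Fin n → Bool) → Fin n → Bool}
    (hinput : ∀ i : Fin n, i.val < r → ∀ x, S x i = x i)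
    {i j : Fin n} (hj : j.val < r) : ¬ Ed r S i j := by
  rintro ⟨⟨x, hx⟩, hns⟩
  rcases eq_or_ne i j with rfl | hij
  · exact hns ⟨rfl, hj⟩
  · apply hx
    rw [hinput j hj x, hinput j hj _]
    exact (Function.update_of_ne hij.symm _ _).symm

lemma ht_lt {n r : ℕ} {S : (Fin n → Bool) → Fin n → Bool}
    (hacyc : ∀ v : Fin n, ¬ Relation.TransGen (Ed r S) v v)
    {i j : Fin n} (hj : r ≤ j.val) (he : RGEdge S i j) :
    ht r S i < ht r S j := by
  classical
  have hEd : Ed r S i j := ⟨he, by rintro ⟨rfl, h⟩; omega⟩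
  apply Finset.card_lt_card
  rw [Finset.ssubset_iff_of_subset]
  · refine ⟨j, ?_, ?_⟩
    · simp only [Finset.mem_filter, Finset.mem_univ, true_and]
      exact ⟨hj, Relation.ReflTransGen.refl⟩
    · simp only [Finset.mem_filter, Finset.mem_univ, true_and, not_and]
      intro _ hrt
      exact hacyc j (Relation.TransGen.tail' hrt hEd)
  · intro k hk
    simp only [Finset.mem_filter, Finset.mem_univ, true_and] at hk ⊢
    exact ⟨hk.1, hk.2.tail hEd⟩

lemma ht_le {n r : ℕ} (hr : r ≤ n) (S : (Fin n → Bool) → Fin n → Bool) (j : Fin n) :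
    ht r S j ≤ n - r := by
  classical
  have h1 : ht r S j ≤ (Finset.univ.filter fun i : Fin n => r ≤ i.val).card := by
    apply Finset.card_le_card
    intro k hk
    simp only [Finset.mem_filter, Finset.mem_univ, true_and] at hk ⊢
    exact hk.1
  have h2 : (Finset.univ.filter fun i : Fin n => r ≤ i.val).card = n - r := by
    rw [← Fintype.card_subtype]
    have e : {i : Fin n // r ≤ i.val} ≃ Fin (n - r) :=
      { toFun := fun x => ⟨x.1.val - r, by have := x.1.isLt; have := x.2; omega⟩
        invFun := fun k => ⟨⟨k.val + r, by have := k.isLt; omega⟩,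
          by simp only [Fin.val_mk]; omega⟩
        left_inv := by
          rintro ⟨⟨v, hv⟩, h⟩
          simp only [Fin.val_mk] at h
          apply Subtype.ext
          apply Fin.ext
          simp only [Fin.val_mk]
          omega
        right_inv := by
          rintro ⟨k, hk⟩
          apply Fin.ext
          simp only [Fin.val_mk]
          omega }
    rw [Fintype.card_congr e, Fintype.card_fin]
  omega

lemma iter_input {n r : ℕ} {S : (Fin n → Bool) → Fin n → Bool}
    (hinput : ∀ i : Fin n, i.val < r → ∀ x, S x i = x i)
    {i : Fin n} (hi : i.val < r) (x : Fin n → Bool) (k : ℕ) :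
    S^[k] x i = x i := by
  induction k with
  | zero => rfl
  | succ k ih => rw [Function.iterate_succ_apply', hinput i hi, ih]

lemma key_s16 {n r : ℕ} {S : (Fin n → Bool) → Fin n → Bool}
    (hinput : ∀ i : Fin n, i.val < r → ∀ x, S x i = x i)
    (hacyc : ∀ v : Fin n, ¬ Relation.TransGen (Ed r S) v v)
    (a : Fin r → Bool) :
    ∀ m (j : Fin n), ht r S j = m →
      ∀ x y : Fin n → Bool,
        (∀ (i : Fin n) (h : i.val < r), x i = a ⟨i.val, h⟩) →
        (∀ (i : Fin n) (h : i.val < r), y i = a ⟨i.val, h⟩) →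
        ∀ k k', m ≤ k → m ≤ k' → S^[k] x j = S^[k'] y j := by
  classical
  intro m
  induction m using Nat.strong_induction_on with
  | _ m ih =>
    intro j hj x y hx hy k k' hk hk'
    by_cases hjr : j.val < r
    · rw [iter_input hinput hjr, iter_input hinput hjr, hx j hjr, hy j hjr]
    · push_neg at hjr
      have hm1 : 1 ≤ m := by
        rw [← hj]
        unfold ht
        apply Finset.card_pos.mpr
        refine ⟨j, ?_⟩
        simp only [Finset.mem_filter, Finset.mem_univ, true_and]
        exact ⟨hjr, Relation.ReflTransGen.refl⟩
      obtain ⟨k₀, rfl⟩ : ∃ k₀, k = k₀ + 1 := ⟨k - 1, by omega⟩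
      obtain ⟨k₁, rfl⟩ : ∃ k₁, k' = k₁ + 1 := ⟨k' - 1, by omega⟩
      rw [Function.iterate_succ_apply', Function.iterate_succ_apply']
      refine indep S j n (S^[k₀] x) (S^[k₁] y) ?_ ?_
      · simpa using Finset.card_filter_le Finset.univ (fun i => S^[k₀] x i ≠ S^[k₁] y i)
      · intro i he
        have hlt : ht r S i < m := hj ▸ ht_lt hacyc hjr he
        exact ih (ht r S i) hlt i rfl x y hx hy k₀ k₁ (by omega) (by omega)

/-- Robert's theorem with instantiated inputs: if the first `r` components are
inputs (`S_i(x) = x_i`) and the only directed cycles of `RG(S)` are the self-loops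
at inputs, then `S` has exactly `2^r` fixed points, and for every instantiation
`a ∈ {0,1}^r` the subcube `C_a` is attracted, in at most `n - r` synchronous
iterations, to the unique fixed point lying in `C_a`. -/
theorem robert_with_inputs {n r : ℕ} (hr : r ≤ n)
    (S : (Fin n → Bool) → Fin n → Bool)
    (hinput : ∀ i : Fin n, i.val < r → ∀ x : Fin n → Bool, S x i = x i)
    (hacyc : ∀ v : Fin n, ¬ Relation.TransGen
      (fun i j => RGEdge S i j ∧ ¬ (i = j ∧ i.val < r)) v v) :
    (Finset.univ.filter fun x : Fin n → Bool => S x = x).card = 2 ^ r ∧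
    ∀ a : Fin r → Bool, ∃ α : Fin n → Bool,
      (∀ (i : Fin n) (h : i.val < r), α i = a ⟨i.val, h⟩) ∧ S α = α ∧
      (∀ β : Fin n → Bool, S β = β →
        (∀ (i : Fin n) (h : i.val < r), β i = a ⟨i.val, h⟩) → β = α) ∧
      (∀ x : Fin n → Bool,
        (∀ (i : Fin n) (h : i.val < r), x i = a ⟨i.val, h⟩) →
        S^[n - r] x = α) := by
  classical
  have hacyc' : ∀ v : Fin n, ¬ Relation.TransGen (Ed r S) v v := hacyc
  have hcast : ∀ (i : Fin n) (h : i.val < r), Fin.castLE hr ⟨i.val, h⟩ = i :=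
    fun i h => Fin.ext rfl
  have main : ∀ a : Fin r → Bool, ∃ α : Fin n → Bool,
      (∀ (i : Fin n) (h : i.val < r), α i = a ⟨i.val, h⟩) ∧ S α = α ∧
      (∀ β : Fin n → Bool, S β = β →
        (∀ (i : Fin n) (h : i.val < r), β i = a ⟨i.val, h⟩) → β = α) ∧
      (∀ x : Fin n → Bool,
        (∀ (i : Fin n) (h : i.val < r), x i = a ⟨i.val, h⟩) →
        S^[n - r] x = α) := by
    intro a
    set x₀ : Fin n → Bool := fun i => if h : i.val < r then a ⟨i.val, h⟩ else false with hx₀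
    have hx₀C : ∀ (i : Fin n) (h : i.val < r), x₀ i = a ⟨i.val, h⟩ := by
      intro i h; simp [hx₀, h]
    refine ⟨S^[n - r] x₀, ?_, ?_, ?_, ?_⟩
    · intro i h
      rw [iter_input hinput h, hx₀C i h]
    · funext j
      rw [← Function.iterate_succ_apply' S (n - r)]
      exact key_s16 hinput hacyc' a (ht r S j) j rfl x₀ x₀ hx₀C hx₀C (n - r + 1) (n - r)
        (le_trans (ht_le hr S j) (by omega)) (ht_le hr S j)
    · intro β hβ hβC
      funext j
      calc β j = S^[n - r] β j := by rw [Function.iterate_fixed hβ]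
        _ = S^[n - r] x₀ j := key_s16 hinput hacyc' a (ht r S j) j rfl β x₀ hβC hx₀C
              (n - r) (n - r) (ht_le hr S j) (ht_le hr S j)
    · intro x hxC
      funext j
      exact key_s16 hinput hacyc' a (ht r S j) j rfl x x₀ hxC hx₀C (n - r) (n - r)
        (ht_le hr S j) (ht_le hr S j)
  refine ⟨?_, main⟩
  have hcard : (Finset.univ.filter fun x : Fin n → Bool => S x = x).card
      = (Finset.univ : Finset (Fin r → Bool)).card := by
    apply Finset.card_bij (fun (x : Fin n → Bool) _ => fun i : Fin r => x (Fin.castLE hr i))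
    · intro x hx
      exact Finset.mem_univ _
    · intro x hx y hy hxy
      simp only [Finset.mem_filter, Finset.mem_univ, true_and] at hx hy
      obtain ⟨α, hαC, hαfix, huniq, hconv⟩ := main (fun i : Fin r => x (Fin.castLE hr i))
      have h1 : x = α := huniq x hx (fun i h => congrArg x (hcast i h).symm)
      have h2 : y = α := huniq y hy (fun i h => by
        have hh := congrFun hxy ⟨i.val, h⟩
        rw [hh]
        exact congrArg y (hcast i h).symm)
      rw [h1, h2]
    · intro a _
      obtain ⟨α, hαC, hαfix, _, _⟩ := main a
      refine ⟨α, by simp [hαfix], ?_⟩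
      funext i
      rw [hαC (Fin.castLE hr i) i.2]
      exact congrArg a (Fin.ext rfl)
  rw [hcard, Finset.card_univ, Fintype.card_fun, Fintype.card_bool, Fintype.card_fin]
end
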